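/- arXiv:1210.7488 — 11 statements merged into one kernel-verified Lean document; each statement's English description precedes it below -/
import Mathlib

section
/- Let R be an algebraic curvature tensor on a 4-dimensional real inner product space V. Then R is Einstein (i.e., Ric = λ⟨·,·⟩ for some real λ) if and only if for every 2-dimensional subspace W ⊂ V, the sectional curvature of W equals the sectional curvature of its orthogonal complement: K(W) = K(W^⊥). -/
open scoped RealInnerProductSpace

/-!
For an orthonormal frame `e₀, e₁, e₂, e₃`, the symmetries `R(x,y,z,w) = -R(y,x,z,w)` and
`R(x,y,z,w) = R(z,w,x,y)` alone give
`Ric(e₀,e₀) + Ric(e₁,e₁) - Ric(e₂,e₂) - Ric(e₃,e₃) = 2 (K(e₀,e₁) - K(e₂,e₃))`,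
which is the forward direction. Conversely, applied to the reorderings of a frame this identity
makes the diagonal of `Ric` constant, while the hypothesis for the frame `(e₀ ± e₁)/√2, e₂, e₃`,
rotated by `π/4` in the plane `e₀e₁`, kills `Ric(e₀,e₁) = R(e₀,e₂,e₁,e₂) + R(e₀,e₃,e₁,e₃)`.
So `Ric = λ⟨·,·⟩` in every frame, and `λ` does not depend on the frame since the contraction
does not.
-/

theorem Equiv.Perm.exists_apply_eq_and_apply_eq {α : Type*} [DecidableEq α] {a b j k : α}
    (hab : a ≠ b) (hjk : j ≠ k) : ∃ σ : Equiv.Perm α, σ a = j ∧ σ b = k := by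
  have hk : Equiv.swap a j k ≠ a := by
    rw [Ne, Equiv.swap_apply_eq_iff, Equiv.swap_apply_left]
    exact hjk.symm
  refine ⟨Equiv.swap a j * Equiv.swap b (Equiv.swap a j k), ?_, ?_⟩
  · rw [Equiv.Perm.mul_apply, Equiv.swap_apply_of_ne_of_ne hab hk.symm, Equiv.swap_apply_left]
  · rw [Equiv.Perm.mul_apply, Equiv.swap_apply_left, Equiv.swap_apply_self]

section InnerProduct

variable {V : Type*} [NormedAddCommGroup V] [InnerProductSpace ℝ V]

theorem OrthonormalBasis.sum_apply_self_eq {ι κ : Type*} [Fintype ι] [Fintype κ]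
    (B : V →ₗ[ℝ] V →ₗ[ℝ] ℝ) (e : OrthonormalBasis ι ℝ V) (f : OrthonormalBasis κ ℝ V) :
    ∑ i, B (e i) (e i) = ∑ j, B (f j) (f j) := by
  calc ∑ i, B (e i) (e i) = ∑ i, B (e i) (∑ j, ⟪f j, e i⟫ • f j) := by
        simp only [f.sum_repr']
    _ = ∑ j, ∑ i, B (⟪e i, f j⟫ • e i) (f j) := by
        rw [Finset.sum_comm]
        simp only [map_sum, map_smul, LinearMap.smul_apply, real_inner_comm]
    _ = ∑ j, B (f j) (f j) := by
        simp only [← LinearMap.sum_apply, ← map_sum, e.sum_repr']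

theorem Orthonormal.exists_orthonormalBasis_coe_eq {ι : Type*} [Fintype ι]
    [FiniteDimensional ℝ V] {f : ι → V} (hf : Orthonormal ℝ f)
    (hcard : Fintype.card ι = Module.finrank ℝ V) :
    ∃ b : OrthonormalBasis ι ℝ V, ⇑b = f :=
  ⟨.mk hf (hf.linearIndependent.span_eq_top_of_card_eq_finrank' hcard).ge,
    OrthonormalBasis.coe_mk _ _⟩

theorem OrthonormalBasis.span_pair_eq_orthogonal (b : OrthonormalBasis (Fin 4) ℝ V) :
    Submodule.span ℝ {b 2, b 3} = (Submodule.span ℝ {b 0, b 1})ᗮ := by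
  apply le_antisymm
  · rw [Submodule.span_le]
    rintro x (rfl | rfl) <;>
      · simp only [SetLike.mem_coe, Submodule.mem_orthogonal', Submodule.mem_span_pair]
        rintro _ ⟨s, t, rfl⟩
        simp [inner_add_right, inner_smul_right, b.inner_eq_ite]
  · intro x hx
    have h0 : ⟪b 0, x⟫ = 0 :=
      Submodule.inner_right_of_mem_orthogonal (Submodule.subset_span (by simp)) hx
    have h1 : ⟪b 1, x⟫ = 0 :=
      Submodule.inner_right_of_mem_orthogonal (Submodule.subset_span (by simp)) hx
    rw [Submodule.mem_span_pair, ← b.sum_repr' x, Fin.sum_univ_four, h0, h1]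
    exact ⟨⟪b 2, x⟫, ⟪b 3, x⟫, by simp⟩

theorem orthonormal_of_span_pair_eq_orthogonal {u v u' v' : V}
    (huu : ⟪u, u⟫ = 1) (hvv : ⟪v, v⟫ = 1) (huv : ⟪u, v⟫ = 0)
    (hu'u' : ⟪u', u'⟫ = 1) (hv'v' : ⟪v', v'⟫ = 1) (hu'v' : ⟪u', v'⟫ = 0)
    (hspan : Submodule.span ℝ {u', v'} = (Submodule.span ℝ {u, v})ᗮ) :
    Orthonormal ℝ ![u, v, u', v'] := by
  have hperp : ∀ x ∈ ({u, v} : Set V), ∀ y ∈ ({u', v'} : Set V), ⟪x, y⟫ = 0 ∧ ⟪y, x⟫ = 0 :=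
    fun x hx y hy =>
      have hxy := Submodule.inner_right_of_mem_orthogonal (Submodule.subset_span hx)
        (hspan ▸ Submodule.subset_span hy)
      ⟨hxy, real_inner_comm x y ▸ hxy⟩
  obtain ⟨huu', hu'u⟩ := hperp u (by simp) u' (by simp)
  obtain ⟨huv', hv'u⟩ := hperp u (by simp) v' (by simp)
  obtain ⟨hvu', hu'v⟩ := hperp v (by simp) u' (by simp)
  obtain ⟨hvv', hv'v⟩ := hperp v (by simp) v' (by simp)
  have hnorm : ∀ x : V, ⟪x, x⟫ = 1 → ‖x‖ = 1 := fun x hx => by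
    rw [norm_eq_sqrt_real_inner, hx, Real.sqrt_one]
  rw [orthonormal_iff_ite]
  intro i j
  fin_cases i <;> fin_cases j <;>
    simp [hnorm u huu, hnorm v hvv, hnorm u' hu'u', hnorm v' hv'v', huv, hu'v',
      real_inner_comm u v, real_inner_comm u' v', huu', hu'u, huv', hv'u, hvu', hu'v, hvv', hv'v]

end InnerProduct

namespace CurvatureTensor

section Curvature

variable {V : Type*} [AddCommGroup V] [Module ℝ V]
  (R : V →ₗ[ℝ] V →ₗ[ℝ] V →ₗ[ℝ] V →ₗ[ℝ] ℝ)

def ricci {ι : Type*} [Fintype ι] (f : ι → V) : V →ₗ[ℝ] V →ₗ[ℝ] ℝ :=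
  ∑ i, (R.flip (f i)).compr₂ (LinearMap.applyₗ (f i))

theorem ricci_apply {ι : Type*} [Fintype ι] (f : ι → V) (x y : V) :
    ricci R f x y = ∑ i, R x (f i) y (f i) := by
  simp [ricci]

theorem ricci_comp_perm {ι : Type*} [Fintype ι] (f : ι → V) (σ : Equiv.Perm ι) :
    ricci R (f ∘ σ) = ricci R f := by
  ext x y
  simpa [ricci_apply] using Equiv.sum_comp σ (fun i => R x (f i) y (f i))

variable {R}

theorem apply_self_left (hanti : ∀ x y z w : V, R x y z w = - R y x z w) (x z w : V) :
    R x x z w = 0 := by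
  linarith [hanti x x z w]

theorem apply_self_right (hanti : ∀ x y z w : V, R x y z w = - R y x z w)
    (hpair : ∀ x y z w : V, R x y z w = R z w x y) (x y z : V) :
    R x y z z = 0 := by
  rw [hpair]
  exact apply_self_left hanti z x y

theorem apply_swap_swap (hanti : ∀ x y z w : V, R x y z w = - R y x z w)
    (hpair : ∀ x y z w : V, R x y z w = R z w x y) (x y : V) :
    R y x y x = R x y x y := by
  rw [hanti, hpair, hanti, hpair, neg_neg]

theorem ricci_add_ricci_sub_ricci_sub_ricci (hanti : ∀ x y z w : V, R x y z w = - R y x z w)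
    (hpair : ∀ x y z w : V, R x y z w = R z w x y) (f : Fin 4 → V) :
    ricci R f (f 0) (f 0) + ricci R f (f 1) (f 1) - ricci R f (f 2) (f 2)
        - ricci R f (f 3) (f 3) =
      2 * (R (f 0) (f 1) (f 0) (f 1) - R (f 2) (f 3) (f 2) (f 3)) := by
  have h0 := apply_self_left hanti
  have hs := apply_swap_swap hanti hpair
  simp only [ricci_apply, Fin.sum_univ_four]
  linarith [h0 (f 0) (f 0) (f 0), h0 (f 1) (f 1) (f 1), h0 (f 2) (f 2) (f 2),
    h0 (f 3) (f 3) (f 3), hs (f 0) (f 1), hs (f 0) (f 2), hs (f 0) (f 3), hs (f 1) (f 2),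
    hs (f 1) (f 3), hs (f 2) (f 3)]

end Curvature

section OppositePlanes

variable {V : Type*} [NormedAddCommGroup V] [InnerProductSpace ℝ V]
  {R : V →ₗ[ℝ] V →ₗ[ℝ] V →ₗ[ℝ] V →ₗ[ℝ] ℝ}

theorem ricci_orthonormalBasis_eq {ι κ : Type*} [Fintype ι] [Fintype κ]
    (e : OrthonormalBasis ι ℝ V) (f : OrthonormalBasis κ ℝ V) : ricci R e = ricci R f := by
  ext x y
  simpa [ricci_apply] using e.sum_apply_self_eq ((R x).flip y) f

variable (R) in
def OppositePlanesSymmetric : Prop :=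
  ∀ f : Fin 4 → V, Orthonormal ℝ f → R (f 0) (f 1) (f 0) (f 1) = R (f 2) (f 3) (f 2) (f 3)

theorem oppositePlanesSymmetric_of_ricci_eq_smul_inner
    (hanti : ∀ x y z w : V, R x y z w = - R y x z w)
    (hpair : ∀ x y z w : V, R x y z w = R z w x y)
    (hlam : ∀ f : Fin 4 → V, Orthonormal ℝ f → ∃ lam : ℝ, ∀ x y, ricci R f x y = lam * ⟪x, y⟫) :
    OppositePlanesSymmetric R := by
  intro f hf
  obtain ⟨lam, hricci⟩ := hlam f hf
  have hsum := ricci_add_ricci_sub_ricci_sub_ricci hanti hpair f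
  simp only [hricci, orthonormal_iff_ite.mp hf, if_true] at hsum
  linarith

theorem oppositePlanesSymmetric_of_span_eq_orthogonal [FiniteDimensional ℝ V]
    (hdim : Module.finrank ℝ V = 4)
    (h : ∀ u v u' v' : V,
        ⟪u, u⟫ = 1 → ⟪v, v⟫ = 1 → ⟪u, v⟫ = 0 →
        ⟪u', u'⟫ = 1 → ⟪v', v'⟫ = 1 → ⟪u', v'⟫ = 0 →
        Submodule.span ℝ ({u', v'} : Set V) = (Submodule.span ℝ ({u, v} : Set V))ᗮ →
        R u v u v = R u' v' u' v') :
    OppositePlanesSymmetric R := by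
  intro f hf
  obtain ⟨b, rfl⟩ := hf.exists_orthonormalBasis_coe_eq (by simp [hdim])
  exact h _ _ _ _ (b.inner_eq_one 0) (b.inner_eq_one 1) (b.inner_eq_zero (by decide))
    (b.inner_eq_one 2) (b.inner_eq_one 3) (b.inner_eq_zero (by decide)) b.span_pair_eq_orthogonal

theorem OppositePlanesSymmetric.apply_add_apply_eq_zero (hK : OppositePlanesSymmetric R)
    (hanti : ∀ x y z w : V, R x y z w = - R y x z w)
    (hpair : ∀ x y z w : V, R x y z w = R z w x y) {f : Fin 4 → V} (hf : Orthonormal ℝ f) :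
    R (f 0) (f 2) (f 1) (f 2) + R (f 0) (f 3) (f 1) (f 3) = 0 := by
  obtain ⟨s, hs⟩ : ∃ s : ℝ, s * s = 1 / 2 :=
    ⟨(√2)⁻¹, by rw [← mul_inv, Real.mul_self_sqrt zero_le_two, one_div]⟩
  have hself : ∀ i, ⟪f i, f i⟫ = 1 := fun i => by simpa using orthonormal_iff_ite.mp hf i i
  let g : Fin 4 → V := ![s • f 0 + s • f 1, s • f 0 + (-s) • f 1, f 2, f 3]
  have hg : Orthonormal ℝ g := by
    rw [orthonormal_iff_ite]
    intro i j
    fin_cases i <;> fin_cases j <;>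
      simp [-inner_self_eq_norm_sq_to_K, g, inner_add_left, inner_add_right,
        inner_smul_left, inner_smul_right, hself, hf.inner_eq_zero] <;> linarith
  have hexp : ∀ t z, R (s • f 0 + t • f 1) z (s • f 0 + t • f 1) z =
      s * s * R (f 0) z (f 0) z + 2 * s * t * R (f 0) z (f 1) z + t * t * R (f 1) z (f 1) z := by
    intro t z
    simp only [map_add, map_smul, LinearMap.add_apply, LinearMap.smul_apply, smul_eq_mul]
    rw [hpair (f 1) z (f 0) z]
    ring
  have e1 : R (s • f 0 + s • f 1) (f 2) (s • f 0 + s • f 1) (f 2) =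
      R (s • f 0 + (-s) • f 1) (f 3) (s • f 0 + (-s) • f 1) (f 3) := by
    simpa [g, Equiv.swap_apply_of_ne_of_ne] using
      hK (g ∘ Equiv.swap 1 2) (hg.comp _ (Equiv.swap 1 2).injective)
  have e2 : R (s • f 0 + s • f 1) (f 3) (s • f 0 + s • f 1) (f 3) =
      R (s • f 0 + (-s) • f 1) (f 2) (s • f 0 + (-s) • f 1) (f 2) := by
    rw [← apply_swap_swap hanti hpair _ (f 2)]
    simpa [g, Equiv.swap_apply_of_ne_of_ne] using
      hK (g ∘ Equiv.swap 1 3) (hg.comp _ (Equiv.swap 1 3).injective)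
  rw [hexp, hexp] at e1 e2
  linear_combination (e1 + e2) / 2 -
    2 * (R (f 0) (f 2) (f 1) (f 2) + R (f 0) (f 3) (f 1) (f 3)) * hs

theorem OppositePlanesSymmetric.ricci_add_ricci_eq (hK : OppositePlanesSymmetric R)
    (hanti : ∀ x y z w : V, R x y z w = - R y x z w)
    (hpair : ∀ x y z w : V, R x y z w = R z w x y) {f : Fin 4 → V} (hf : Orthonormal ℝ f) :
    ricci R f (f 0) (f 0) + ricci R f (f 1) (f 1) =
      ricci R f (f 2) (f 2) + ricci R f (f 3) (f 3) := by
  linarith [ricci_add_ricci_sub_ricci_sub_ricci hanti hpair f, hK f hf]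

theorem OppositePlanesSymmetric.ricci_apply_self_eq (hK : OppositePlanesSymmetric R)
    (hanti : ∀ x y z w : V, R x y z w = - R y x z w)
    (hpair : ∀ x y z w : V, R x y z w = R z w x y) {f : Fin 4 → V} (hf : Orthonormal ℝ f)
    (j : Fin 4) : ricci R f (f j) (f j) = ricci R f (f 0) (f 0) := by
  have h₁ := hK.ricci_add_ricci_eq hanti hpair hf
  have h₂ := hK.ricci_add_ricci_eq hanti hpair (hf.comp _ (Equiv.swap 1 2).injective)
  have h₃ := hK.ricci_add_ricci_eq hanti hpair (hf.comp _ (Equiv.swap 1 3).injective)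
  simp only [ricci_comp_perm, Function.comp_apply] at h₂ h₃
  simp only [ne_eq, zero_ne_one, not_false_eq_true, Fin.reduceEq, Equiv.swap_apply_of_ne_of_ne,
    Equiv.swap_apply_left, Equiv.swap_apply_right] at h₂ h₃
  fin_cases j <;> simp only [Fin.zero_eta, Fin.mk_one, Fin.reduceFinMk] <;> linarith

theorem OppositePlanesSymmetric.ricci_apply_eq_zero (hK : OppositePlanesSymmetric R)
    (hanti : ∀ x y z w : V, R x y z w = - R y x z w)
    (hpair : ∀ x y z w : V, R x y z w = R z w x y) {f : Fin 4 → V} (hf : Orthonormal ℝ f)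
    {j k : Fin 4} (hjk : j ≠ k) : ricci R f (f j) (f k) = 0 := by
  obtain ⟨σ, rfl, rfl⟩ := Equiv.Perm.exists_apply_eq_and_apply_eq zero_ne_one hjk
  have hσ := hK.apply_add_apply_eq_zero hanti hpair (hf.comp σ σ.injective)
  rw [← ricci_comp_perm R f σ, ricci_apply]
  simpa [Fin.sum_univ_four, apply_self_left hanti, apply_self_right hanti hpair] using hσ

theorem OppositePlanesSymmetric.ricci_eq_smul_innerₗ (hK : OppositePlanesSymmetric R)
    (hanti : ∀ x y z w : V, R x y z w = - R y x z w)
    (hpair : ∀ x y z w : V, R x y z w = R z w x y) (b : OrthonormalBasis (Fin 4) ℝ V) :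
    ricci R b = ricci R b (b 0) (b 0) • innerₗ V := by
  refine LinearMap.ext_basis b.toBasis b.toBasis fun j k => ?_
  simp only [OrthonormalBasis.coe_toBasis, LinearMap.smul_apply, innerₗ_apply_apply,
    b.inner_eq_ite, smul_eq_mul]
  split_ifs with hjk
  · rw [hjk, mul_one, hK.ricci_apply_self_eq hanti hpair b.orthonormal]
  · rw [mul_zero, hK.ricci_apply_eq_zero hanti hpair b.orthonormal hjk]

end OppositePlanes

end CurvatureTensor

theorem einstein_iff_opposite_planes_general
    {V : Type*} [NormedAddCommGroup V] [InnerProductSpace ℝ V]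
    [FiniteDimensional ℝ V] (hdim : Module.finrank ℝ V = 4)
    (R : V →ₗ[ℝ] V →ₗ[ℝ] V →ₗ[ℝ] V →ₗ[ℝ] ℝ)
    (hanti : ∀ x y z w : V, R x y z w = - R y x z w)
    (hpair : ∀ x y z w : V, R x y z w = R z w x y) :
    (∃ lam : ℝ, ∀ (e : OrthonormalBasis (Fin 4) ℝ V) (x y : V),
        ∑ i, R x (e i) y (e i) = lam * ⟪x, y⟫) ↔
    (∀ u v u' v' : V,
        ⟪u, u⟫ = 1 → ⟪v, v⟫ = 1 → ⟪u, v⟫ = 0 →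
        ⟪u', u'⟫ = 1 → ⟪v', v'⟫ = 1 → ⟪u', v'⟫ = 0 →
        Submodule.span ℝ ({u', v'} : Set V) =
          (Submodule.span ℝ ({u, v} : Set V))ᗮ →
        R u v u v = R u' v' u' v') := by
  constructor
  · rintro ⟨lam, hlam⟩ u v u' v' huu hvv huv hu'u' hv'v' hu'v' hspan
    have hK : CurvatureTensor.OppositePlanesSymmetric R := by
      refine CurvatureTensor.oppositePlanesSymmetric_of_ricci_eq_smul_inner hanti hpair
        fun f hf => ?_
      obtain ⟨b, rfl⟩ := hf.exists_orthonormalBasis_coe_eq (by simp [hdim])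
      exact ⟨lam, fun x y => (CurvatureTensor.ricci_apply R b x y).trans (hlam b x y)⟩
    simpa using
      hK _ (orthonormal_of_span_pair_eq_orthogonal huu hvv huv hu'u' hv'v' hu'v' hspan)
  · intro h
    have hK := CurvatureTensor.oppositePlanesSymmetric_of_span_eq_orthogonal hdim h
    let e₀ : OrthonormalBasis (Fin 4) ℝ V := (stdOrthonormalBasis ℝ V).reindex (finCongr hdim)
    refine ⟨CurvatureTensor.ricci R e₀ (e₀ 0) (e₀ 0), fun e x y => ?_⟩
    have he := hK.ricci_eq_smul_innerₗ hanti hpair e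
    have hconst : CurvatureTensor.ricci R e₀ (e₀ 0) (e₀ 0) =
        CurvatureTensor.ricci R e (e 0) (e 0) := by
      rw [CurvatureTensor.ricci_orthonormalBasis_eq e₀ e, he]
      simp
    rw [hconst, ← CurvatureTensor.ricci_apply, he]
    simp

/-- An algebraic curvature tensor on a 4-dimensional real inner product space is
Einstein if and only if every 2-dimensional subspace has the same sectional
curvature as its orthogonal complement. -/
theorem einstein_iff_opposite_planes
    {V : Type*} [NormedAddCommGroup V] [InnerProductSpace ℝ V]
    [FiniteDimensional ℝ V] (hdim : Module.finrank ℝ V = 4)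
    (R : V →ₗ[ℝ] V →ₗ[ℝ] V →ₗ[ℝ] V →ₗ[ℝ] ℝ)
    (hanti : ∀ x y z w : V, R x y z w = - R y x z w)
    (hpair : ∀ x y z w : V, R x y z w = R z w x y)
    (hbianchi : ∀ x y z w : V, R x y z w + R y z x w + R z x y w = 0) :
    (∃ lam : ℝ, ∀ (e : OrthonormalBasis (Fin 4) ℝ V) (x y : V),
        ∑ i, R x (e i) y (e i) = lam * ⟪x, y⟫) ↔
    (∀ u v u' v' : V,
        ⟪u, u⟫ = 1 → ⟪v, v⟫ = 1 → ⟪u, v⟫ = 0 →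
        ⟪u', u'⟫ = 1 → ⟪v', v'⟫ = 1 → ⟪u', v'⟫ = 0 →
        Submodule.span ℝ ({u', v'} : Set V) =
          (Submodule.span ℝ ({u, v} : Set V))ᗮ →
        R u v u v = R u' v' u' v') :=
  einstein_iff_opposite_planes_general hdim R hanti hpair
end

section
/- Let R be a Ricci-flat algebraic curvature tensor on a 4-dimensional real inner product space V, and let K_max (respectively K_min) denote the maximum (respectively minimum) of the sectional curvature of R over all 2-planes in V. Then −(1/2)·K_min ≤ K_max ≤ −2·K_min. -/
/-!
Ricci-flatness says that for every unit vector `u` and orthonormal basis `u, w, a, b` the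
sectional curvatures of the planes `u ∧ w`, `u ∧ a`, `u ∧ b` sum to zero. Taking `u ∧ w` to be a
plane of minimal curvature gives `0 ≤ K_min + 2 K_max`; taking it of maximal curvature gives
`0 ≥ K_max + 2 K_min`.
-/

open scoped RealInnerProductSpace

section

variable {V : Type*} [NormedAddCommGroup V] [InnerProductSpace ℝ V]

theorem orthonormal_pair_iff {u w : V} :
    Orthonormal ℝ ![u, w] ↔ ⟪u, u⟫ = 1 ∧ ⟪w, w⟫ = 1 ∧ ⟪u, w⟫ = 0 := by
  simp [orthonormal_iff_ite, Fin.forall_fin_two, real_inner_comm u w]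
  tauto

theorem Orthonormal.exists_orthonormalBasis_extension_pair {n : ℕ}
    (hdim : Module.finrank ℝ V = n + 2) {u w : V} (h : Orthonormal ℝ ![u, w]) :
    ∃ e : OrthonormalBasis (Fin (n + 2)) ℝ V, e 0 = u ∧ e 1 = w := by
  have : FiniteDimensional ℝ V := Module.finite_of_finrank_eq_succ hdim
  let s : Set (Fin (n + 2)) := {0, 1}
  let v : Fin (n + 2) → V := Fin.cons u (Fin.cons w 0)
  let f : s → Fin 2 := fun i => if (i : Fin (n + 2)) = 0 then 0 else 1
  have hf : Function.Injective f := by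
    rintro ⟨i, rfl | rfl⟩ ⟨j, rfl | rfl⟩ <;> simp [f]
  have hs : Orthonormal ℝ (s.domRestrict v) := by
    convert h.comp f hf
    ext ⟨i, rfl | rfl⟩ <;> simp [v, f]
  obtain ⟨e, he⟩ := hs.exists_orthonormalBasis_extension_of_card_eq (by simpa using hdim)
  exact ⟨e, he 0 (by simp [s]), he 1 (by simp [s])⟩

theorem exists_sectional_curvature_sum_eq_zero (hdim : Module.finrank ℝ V = 4)
    (R : V →ₗ[ℝ] V →ₗ[ℝ] V →ₗ[ℝ] V →ₗ[ℝ] ℝ)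
    (hanti : ∀ x y z w : V, R x y z w = - R y x z w)
    (hricciflat : ∀ (e : OrthonormalBasis (Fin 4) ℝ V) (x y : V), ∑ i, R x (e i) y (e i) = 0)
    {u w : V} (huw : Orthonormal ℝ ![u, w]) :
    ∃ a b : V, Orthonormal ℝ ![u, a] ∧ Orthonormal ℝ ![u, b] ∧
      R u w u w + R u a u a + R u b u b = 0 := by
  obtain ⟨e, rfl, rfl⟩ := huw.exists_orthonormalBasis_extension_pair (n := 2) hdim
  have horth (j : Fin 4) (hj : j ≠ 0) : Orthonormal ℝ ![e 0, e j] := by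
    convert e.orthonormal.comp ![0, j]
      (by simp [Function.Injective, Fin.forall_fin_two, hj, hj.symm])
    ext i; fin_cases i <;> rfl
  have hR : R (e 0) (e 0) (e 0) (e 0) = 0 := by linarith [hanti (e 0) (e 0) (e 0) (e 0)]
  have hric := hricciflat e (e 0) (e 0)
  rw [Fin.sum_univ_four, hR, zero_add] at hric
  exact ⟨e 2, e 3, horth 2 (by decide), horth 3 (by decide), hric⟩

end

theorem ricci_flat_pinching_general
    {V : Type*} [NormedAddCommGroup V] [InnerProductSpace ℝ V]
    (hdim : Module.finrank ℝ V = 4)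
    (R : V →ₗ[ℝ] V →ₗ[ℝ] V →ₗ[ℝ] V →ₗ[ℝ] ℝ)
    (hanti : ∀ x y z w : V, R x y z w = - R y x z w)
    (hricciflat : ∀ (e : OrthonormalBasis (Fin 4) ℝ V) (x y : V),
      ∑ i, R x (e i) y (e i) = 0)
    (Kmax Kmin : ℝ)
    -- Kmax is the (attained) maximum of sectional curvature over all 2-planes
    (hmax_mem : ∃ u v : V, ⟪u, u⟫ = 1 ∧ ⟪v, v⟫ = 1 ∧ ⟪u, v⟫ = 0 ∧
      R u v u v = Kmax)
    (hmax_ub : ∀ u v : V, ⟪u, u⟫ = 1 → ⟪v, v⟫ = 1 → ⟪u, v⟫ = 0 →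
      R u v u v ≤ Kmax)
    -- Kmin is the (attained) minimum of sectional curvature over all 2-planes
    (hmin_mem : ∃ u v : V, ⟪u, u⟫ = 1 ∧ ⟪v, v⟫ = 1 ∧ ⟪u, v⟫ = 0 ∧
      R u v u v = Kmin)
    (hmin_lb : ∀ u v : V, ⟪u, u⟫ = 1 → ⟪v, v⟫ = 1 → ⟪u, v⟫ = 0 →
      Kmin ≤ R u v u v) :
    -(1/2) * Kmin ≤ Kmax ∧ Kmax ≤ -2 * Kmin := by
  have hmax (u v : V) (h : Orthonormal ℝ ![u, v]) : R u v u v ≤ Kmax := by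
    obtain ⟨hu, hv, huv⟩ := orthonormal_pair_iff.1 h
    exact hmax_ub u v hu hv huv
  have hmin (u v : V) (h : Orthonormal ℝ ![u, v]) : Kmin ≤ R u v u v := by
    obtain ⟨hu, hv, huv⟩ := orthonormal_pair_iff.1 h
    exact hmin_lb u v hu hv huv
  constructor
  · obtain ⟨u, w, huw, rfl⟩ : ∃ u w : V, Orthonormal ℝ ![u, w] ∧ R u w u w = Kmin := by
      simpa only [orthonormal_pair_iff, and_assoc] using hmin_mem
    obtain ⟨a, b, ha, hb, hsum⟩ :=
      exists_sectional_curvature_sum_eq_zero hdim R hanti hricciflat huw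
    linarith [hmax u a ha, hmax u b hb]
  · obtain ⟨u, w, huw, rfl⟩ : ∃ u w : V, Orthonormal ℝ ![u, w] ∧ R u w u w = Kmax := by
      simpa only [orthonormal_pair_iff, and_assoc] using hmax_mem
    obtain ⟨a, b, ha, hb, hsum⟩ :=
      exists_sectional_curvature_sum_eq_zero hdim R hanti hricciflat huw
    linarith [hmin u a ha, hmin u b hb]

/-- For a Ricci-flat algebraic curvature tensor on a 4-dimensional real inner
product space, the extrema of sectional curvature satisfy
−(1/2)·Kmin ≤ Kmax ≤ −2·Kmin. -/
theorem ricci_flat_pinching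
    {V : Type*} [NormedAddCommGroup V] [InnerProductSpace ℝ V]
    [FiniteDimensional ℝ V] (hdim : Module.finrank ℝ V = 4)
    (R : V →ₗ[ℝ] V →ₗ[ℝ] V →ₗ[ℝ] V →ₗ[ℝ] ℝ)
    (hanti : ∀ x y z w : V, R x y z w = - R y x z w)
    (hpair : ∀ x y z w : V, R x y z w = R z w x y)
    (hbianchi : ∀ x y z w : V, R x y z w + R y z x w + R z x y w = 0)
    (hricciflat : ∀ (e : OrthonormalBasis (Fin 4) ℝ V) (x y : V),
      ∑ i, R x (e i) y (e i) = 0)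
    (Kmax Kmin : ℝ)
    -- Kmax is the (attained) maximum of sectional curvature over all 2-planes
    (hmax_mem : ∃ u v : V, ⟪u, u⟫ = 1 ∧ ⟪v, v⟫ = 1 ∧ ⟪u, v⟫ = 0 ∧
      R u v u v = Kmax)
    (hmax_ub : ∀ u v : V, ⟪u, u⟫ = 1 → ⟪v, v⟫ = 1 → ⟪u, v⟫ = 0 →
      R u v u v ≤ Kmax)
    -- Kmin is the (attained) minimum of sectional curvature over all 2-planes
    (hmin_mem : ∃ u v : V, ⟪u, u⟫ = 1 ∧ ⟪v, v⟫ = 1 ∧ ⟪u, v⟫ = 0 ∧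
      R u v u v = Kmin)
    (hmin_lb : ∀ u v : V, ⟪u, u⟫ = 1 → ⟪v, v⟫ = 1 → ⟪u, v⟫ = 0 →
      Kmin ≤ R u v u v) :
    -(1/2) * Kmin ≤ Kmax ∧ Kmax ≤ -2 * Kmin :=
  ricci_flat_pinching_general hdim R hanti hricciflat Kmax Kmin hmax_mem hmax_ub hmin_mem hmin_lb
end

section
/- Let R be an Einstein algebraic curvature tensor with constant λ on a 4-dimensional real inner product space, and let (e_0,e_1,e_2,e_3) be an orthonormal basis such that R_{ijik} = 0 whenever j ≠ k (0 ≤ i,j,k ≤ 3). Then (1/2)·Q_{0303} = K_{03}² + 2(λ − K_{03})·K_{01} − 2K_{01}² + q, where q = R_{0123}² + R_{0231}² + 4·R_{0123}·R_{0231}. -/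
open scoped RealInnerProductSpace

set_option maxHeartbeats 4000000 in
/-- The "sectional curvature" `Q₀₃₀₃` of the quadratic curvature term `Q(R)`
for an Einstein algebraic curvature tensor in a Berger-type orthonormal basis. -/
theorem Q0303_formula
    {V : Type*} [NormedAddCommGroup V] [InnerProductSpace ℝ V]
    [FiniteDimensional ℝ V] (hdim : Module.finrank ℝ V = 4)
    (R : V →ₗ[ℝ] V →ₗ[ℝ] V →ₗ[ℝ] V →ₗ[ℝ] ℝ) (lam : ℝ)
    (hanti : ∀ x y z w : V, R x y z w = - R y x z w)
    (hpair : ∀ x y z w : V, R x y z w = R z w x y)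
    (hbianchi : ∀ x y z w : V, R x y z w + R y z x w + R z x y w = 0)
    (heinstein : ∀ (f : OrthonormalBasis (Fin 4) ℝ V) (x y : V),
      ∑ i, R x (f i) y (f i) = lam * ⟪x, y⟫)
    (e : OrthonormalBasis (Fin 4) ℝ V)
    (hdiag : ∀ i j k : Fin 4, j ≠ k → R (e i) (e j) (e i) (e k) = 0)
    (B Q : Fin 4 → Fin 4 → Fin 4 → Fin 4 → ℝ)
    (hB : ∀ i j k l : Fin 4, B i j k l =
      ∑ p, ∑ q, R (e i) (e p) (e j) (e q) * R (e k) (e p) (e l) (e q))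
    (hQ : ∀ i j k l : Fin 4, Q i j k l =
      2 * (B i j k l - B i j l k + B i k j l - B i l j k)) :
    (1/2) * Q 0 3 0 3 =
      (R (e 0) (e 3) (e 0) (e 3))^2
        + 2 * (lam - R (e 0) (e 3) (e 0) (e 3)) * R (e 0) (e 1) (e 0) (e 1)
        - 2 * (R (e 0) (e 1) (e 0) (e 1))^2
        + ((R (e 0) (e 1) (e 2) (e 3))^2 + (R (e 0) (e 2) (e 3) (e 1))^2
            + 4 * R (e 0) (e 1) (e 2) (e 3) * R (e 0) (e 2) (e 3) (e 1)) := by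
  have hswap2 : ∀ x y z w : V, R x y z w = - R x y w z := by
    intro x y z w
    rw [hpair, hanti, hpair]
  have h11 : ∀ x z w : V, R x x z w = 0 := by
    intro x z w
    have := hanti x x z w
    linarith
  have h22 : ∀ x y z : V, R x y z z = 0 := by
    intro x y z
    have := hswap2 x y z z
    linarith
  have c0000 : R (e 0) (e 0) (e 0) (e 0) = 0 := by linarith [h11 (e 0) (e 0) (e 0)]
  have c0001 : R (e 0) (e 0) (e 0) (e 1) = 0 := by linarith [h11 (e 0) (e 0) (e 1)]
  have c0002 : R (e 0) (e 0) (e 0) (e 2) = 0 := by linarith [h11 (e 0) (e 0) (e 2)]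
  have c0003 : R (e 0) (e 0) (e 0) (e 3) = 0 := by linarith [h11 (e 0) (e 0) (e 3)]
  have c0030 : R (e 0) (e 0) (e 3) (e 0) = 0 := by linarith [h11 (e 0) (e 3) (e 0)]
  have c0031 : R (e 0) (e 0) (e 3) (e 1) = 0 := by linarith [h11 (e 0) (e 3) (e 1)]
  have c0032 : R (e 0) (e 0) (e 3) (e 2) = 0 := by linarith [h11 (e 0) (e 3) (e 2)]
  have c0033 : R (e 0) (e 0) (e 3) (e 3) = 0 := by linarith [h11 (e 0) (e 3) (e 3)]
  have c0100 : R (e 0) (e 1) (e 0) (e 0) = 0 := by linarith [h22 (e 0) (e 1) (e 0)]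
  have c0102 : R (e 0) (e 1) (e 0) (e 2) = 0 := by linarith [hdiag 0 1 2 (by decide)]
  have c0103 : R (e 0) (e 1) (e 0) (e 3) = 0 := by linarith [hdiag 0 1 3 (by decide)]
  have c0130 : R (e 0) (e 1) (e 3) (e 0) = 0 := by linarith [hswap2 (e 0) (e 1) (e 3) (e 0), hdiag 0 1 3 (by decide)]
  have c0131 : R (e 0) (e 1) (e 3) (e 1) = 0 := by linarith [hswap2 (e 0) (e 1) (e 3) (e 1), hanti (e 0) (e 1) (e 1) (e 3), hdiag 1 0 3 (by decide)]
  have c0132 : R (e 0) (e 1) (e 3) (e 2) = -(R (e 0) (e 1) (e 2) (e 3)) := by linarith [hswap2 (e 0) (e 1) (e 3) (e 2)]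
  have c0133 : R (e 0) (e 1) (e 3) (e 3) = 0 := by linarith [h22 (e 0) (e 1) (e 3)]
  have c0200 : R (e 0) (e 2) (e 0) (e 0) = 0 := by linarith [h22 (e 0) (e 2) (e 0)]
  have c0201 : R (e 0) (e 2) (e 0) (e 1) = 0 := by linarith [hpair (e 0) (e 2) (e 0) (e 1), hdiag 0 1 2 (by decide)]
  have c0203 : R (e 0) (e 2) (e 0) (e 3) = 0 := by linarith [hdiag 0 2 3 (by decide)]
  have c0230 : R (e 0) (e 2) (e 3) (e 0) = 0 := by linarith [hswap2 (e 0) (e 2) (e 3) (e 0), hdiag 0 2 3 (by decide)]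
  have c0231 : R (e 0) (e 2) (e 3) (e 1) = R (e 0) (e 2) (e 3) (e 1) := by linarith [hswap2 (e 0) (e 2) (e 3) (e 1), hswap2 (e 0) (e 2) (e 1) (e 3)]
  have c0232 : R (e 0) (e 2) (e 3) (e 2) = 0 := by linarith [hswap2 (e 0) (e 2) (e 3) (e 2), hanti (e 0) (e 2) (e 2) (e 3), hdiag 2 0 3 (by decide)]
  have c0233 : R (e 0) (e 2) (e 3) (e 3) = 0 := by linarith [h22 (e 0) (e 2) (e 3)]
  have c0300 : R (e 0) (e 3) (e 0) (e 0) = 0 := by linarith [h22 (e 0) (e 3) (e 0)]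
  have c0301 : R (e 0) (e 3) (e 0) (e 1) = 0 := by linarith [hpair (e 0) (e 3) (e 0) (e 1), hdiag 0 1 3 (by decide)]
  have c0302 : R (e 0) (e 3) (e 0) (e 2) = 0 := by linarith [hpair (e 0) (e 3) (e 0) (e 2), hdiag 0 2 3 (by decide)]
  have c0330 : R (e 0) (e 3) (e 3) (e 0) = -(R (e 0) (e 3) (e 0) (e 3)) := by linarith [hswap2 (e 0) (e 3) (e 3) (e 0)]
  have c0331 : R (e 0) (e 3) (e 3) (e 1) = 0 := by linarith [hswap2 (e 0) (e 3) (e 3) (e 1), hanti (e 0) (e 3) (e 1) (e 3), hswap2 (e 3) (e 0) (e 1) (e 3), hdiag 3 0 1 (by decide)]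
  have c0332 : R (e 0) (e 3) (e 3) (e 2) = 0 := by linarith [hswap2 (e 0) (e 3) (e 3) (e 2), hanti (e 0) (e 3) (e 2) (e 3), hswap2 (e 3) (e 0) (e 2) (e 3), hdiag 3 0 2 (by decide)]
  have c0333 : R (e 0) (e 3) (e 3) (e 3) = 0 := by linarith [h22 (e 0) (e 3) (e 3)]
  have c1010 : R (e 1) (e 0) (e 1) (e 0) = R (e 0) (e 1) (e 0) (e 1) := by linarith [hanti (e 1) (e 0) (e 1) (e 0), hswap2 (e 0) (e 1) (e 1) (e 0)]
  have c1111 : R (e 1) (e 1) (e 1) (e 1) = 0 := by linarith [h11 (e 1) (e 1) (e 1)]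
  have c2020 : R (e 2) (e 0) (e 2) (e 0) = R (e 0) (e 2) (e 0) (e 2) := by linarith [hanti (e 2) (e 0) (e 2) (e 0), hswap2 (e 0) (e 2) (e 2) (e 0)]
  have c2121 : R (e 2) (e 1) (e 2) (e 1) = R (e 1) (e 2) (e 1) (e 2) := by linarith [hanti (e 2) (e 1) (e 2) (e 1), hswap2 (e 1) (e 2) (e 2) (e 1)]
  have c2222 : R (e 2) (e 2) (e 2) (e 2) = 0 := by linarith [h11 (e 2) (e 2) (e 2)]
  have c3000 : R (e 3) (e 0) (e 0) (e 0) = 0 := by linarith [h22 (e 3) (e 0) (e 0)]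
  have c3001 : R (e 3) (e 0) (e 0) (e 1) = 0 := by linarith [hanti (e 3) (e 0) (e 0) (e 1), hpair (e 0) (e 3) (e 0) (e 1), hdiag 0 1 3 (by decide)]
  have c3002 : R (e 3) (e 0) (e 0) (e 2) = 0 := by linarith [hanti (e 3) (e 0) (e 0) (e 2), hpair (e 0) (e 3) (e 0) (e 2), hdiag 0 2 3 (by decide)]
  have c3003 : R (e 3) (e 0) (e 0) (e 3) = -(R (e 0) (e 3) (e 0) (e 3)) := by linarith [hanti (e 3) (e 0) (e 0) (e 3)]
  have c3030 : R (e 3) (e 0) (e 3) (e 0) = R (e 0) (e 3) (e 0) (e 3) := by linarith [hanti (e 3) (e 0) (e 3) (e 0), hswap2 (e 0) (e 3) (e 3) (e 0)]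
  have c3031 : R (e 3) (e 0) (e 3) (e 1) = 0 := by linarith [hanti (e 3) (e 0) (e 3) (e 1), hswap2 (e 0) (e 3) (e 3) (e 1), hanti (e 0) (e 3) (e 1) (e 3), hswap2 (e 3) (e 0) (e 1) (e 3), hdiag 3 0 1 (by decide)]
  have c3032 : R (e 3) (e 0) (e 3) (e 2) = 0 := by linarith [hanti (e 3) (e 0) (e 3) (e 2), hswap2 (e 0) (e 3) (e 3) (e 2), hanti (e 0) (e 3) (e 2) (e 3), hswap2 (e 3) (e 0) (e 2) (e 3), hdiag 3 0 2 (by decide)]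
  have c3033 : R (e 3) (e 0) (e 3) (e 3) = 0 := by linarith [h22 (e 3) (e 0) (e 3)]
  have c3100 : R (e 3) (e 1) (e 0) (e 0) = 0 := by linarith [h22 (e 3) (e 1) (e 0)]
  have c3101 : R (e 3) (e 1) (e 0) (e 1) = 0 := by linarith [hanti (e 3) (e 1) (e 0) (e 1), hpair (e 1) (e 3) (e 0) (e 1), hanti (e 0) (e 1) (e 1) (e 3), hdiag 1 0 3 (by decide)]
  have c3102 : R (e 3) (e 1) (e 0) (e 2) = R (e 0) (e 2) (e 3) (e 1) := by linarith [hanti (e 3) (e 1) (e 0) (e 2), hpair (e 1) (e 3) (e 0) (e 2), hswap2 (e 0) (e 2) (e 1) (e 3)]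
  have c3103 : R (e 3) (e 1) (e 0) (e 3) = 0 := by linarith [hanti (e 3) (e 1) (e 0) (e 3), hpair (e 1) (e 3) (e 0) (e 3), hanti (e 0) (e 3) (e 1) (e 3), hswap2 (e 3) (e 0) (e 1) (e 3), hdiag 3 0 1 (by decide)]
  have c3130 : R (e 3) (e 1) (e 3) (e 0) = 0 := by linarith [hanti (e 3) (e 1) (e 3) (e 0), hswap2 (e 1) (e 3) (e 3) (e 0), hpair (e 1) (e 3) (e 0) (e 3), hanti (e 0) (e 3) (e 1) (e 3), hswap2 (e 3) (e 0) (e 1) (e 3), hdiag 3 0 1 (by decide)]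
  have c3131 : R (e 3) (e 1) (e 3) (e 1) = R (e 1) (e 3) (e 1) (e 3) := by linarith [hanti (e 3) (e 1) (e 3) (e 1), hswap2 (e 1) (e 3) (e 3) (e 1)]
  have c3132 : R (e 3) (e 1) (e 3) (e 2) = 0 := by linarith [hanti (e 3) (e 1) (e 3) (e 2), hswap2 (e 1) (e 3) (e 3) (e 2), hanti (e 1) (e 3) (e 2) (e 3), hswap2 (e 3) (e 1) (e 2) (e 3), hdiag 3 1 2 (by decide)]
  have c3133 : R (e 3) (e 1) (e 3) (e 3) = 0 := by linarith [h22 (e 3) (e 1) (e 3)]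
  have c3200 : R (e 3) (e 2) (e 0) (e 0) = 0 := by linarith [h22 (e 3) (e 2) (e 0)]
  have c3201 : R (e 3) (e 2) (e 0) (e 1) = -(R (e 0) (e 1) (e 2) (e 3)) := by linarith [hanti (e 3) (e 2) (e 0) (e 1), hpair (e 2) (e 3) (e 0) (e 1)]
  have c3202 : R (e 3) (e 2) (e 0) (e 2) = 0 := by linarith [hanti (e 3) (e 2) (e 0) (e 2), hpair (e 2) (e 3) (e 0) (e 2), hanti (e 0) (e 2) (e 2) (e 3), hdiag 2 0 3 (by decide)]
  have c3203 : R (e 3) (e 2) (e 0) (e 3) = 0 := by linarith [hanti (e 3) (e 2) (e 0) (e 3), hpair (e 2) (e 3) (e 0) (e 3), hanti (e 0) (e 3) (e 2) (e 3), hswap2 (e 3) (e 0) (e 2) (e 3), hdiag 3 0 2 (by decide)]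
  have c3230 : R (e 3) (e 2) (e 3) (e 0) = 0 := by linarith [hanti (e 3) (e 2) (e 3) (e 0), hswap2 (e 2) (e 3) (e 3) (e 0), hpair (e 2) (e 3) (e 0) (e 3), hanti (e 0) (e 3) (e 2) (e 3), hswap2 (e 3) (e 0) (e 2) (e 3), hdiag 3 0 2 (by decide)]
  have c3231 : R (e 3) (e 2) (e 3) (e 1) = 0 := by linarith [hanti (e 3) (e 2) (e 3) (e 1), hswap2 (e 2) (e 3) (e 3) (e 1), hpair (e 2) (e 3) (e 1) (e 3), hanti (e 1) (e 3) (e 2) (e 3), hswap2 (e 3) (e 1) (e 2) (e 3), hdiag 3 1 2 (by decide)]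
  have c3232 : R (e 3) (e 2) (e 3) (e 2) = R (e 2) (e 3) (e 2) (e 3) := by linarith [hanti (e 3) (e 2) (e 3) (e 2), hswap2 (e 2) (e 3) (e 3) (e 2)]
  have c3233 : R (e 3) (e 2) (e 3) (e 3) = 0 := by linarith [h22 (e 3) (e 2) (e 3)]
  have c3300 : R (e 3) (e 3) (e 0) (e 0) = 0 := by linarith [h11 (e 3) (e 0) (e 0)]
  have c3301 : R (e 3) (e 3) (e 0) (e 1) = 0 := by linarith [h11 (e 3) (e 0) (e 1)]
  have c3302 : R (e 3) (e 3) (e 0) (e 2) = 0 := by linarith [h11 (e 3) (e 0) (e 2)]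
  have c3303 : R (e 3) (e 3) (e 0) (e 3) = 0 := by linarith [h11 (e 3) (e 0) (e 3)]
  have c3330 : R (e 3) (e 3) (e 3) (e 0) = 0 := by linarith [h11 (e 3) (e 3) (e 0)]
  have c3331 : R (e 3) (e 3) (e 3) (e 1) = 0 := by linarith [h11 (e 3) (e 3) (e 1)]
  have c3332 : R (e 3) (e 3) (e 3) (e 2) = 0 := by linarith [h11 (e 3) (e 3) (e 2)]
  have c3333 : R (e 3) (e 3) (e 3) (e 3) = 0 := by linarith [h11 (e 3) (e 3) (e 3)]
  have hE : ∀ i : Fin 4, (∑ p, R (e i) (e p) (e i) (e p)) = lam := by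
    intro i
    have h := heinstein e (e i) (e i)
    rwa [orthonormal_iff_ite.mp e.orthonormal, if_pos rfl, mul_one] at h
  have hE0 := hE 0
  have hE1 := hE 1
  have hE2 := hE 2
  have hE3 := hE 3
  simp only [Fin.sum_univ_four] at hE0 hE1 hE2 hE3
  rw [c0000] at hE0
  rw [c1010, c1111] at hE1
  rw [c2020, c2121, c2222] at hE2
  rw [c3030, c3131, c3232, c3333] at hE3
  have hf : R (e 1) (e 3) (e 1) (e 3) = R (e 0) (e 2) (e 0) (e 2) := by linarith
  have hg : R (e 2) (e 3) (e 2) (e 3) = R (e 0) (e 1) (e 0) (e 1) := by linarith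
  have hlam : lam = R (e 0) (e 1) (e 0) (e 1) + R (e 0) (e 2) (e 0) (e 2)
      + R (e 0) (e 3) (e 0) (e 3) := by linarith
  simp only [hQ, hB, Fin.sum_univ_four]
  simp only [c0000, c0001, c0002, c0003, c0030, c0031, c0032, c0033, c0100, c0102, c0103, c0130, c0131, c0132, c0133, c0200, c0201, c0203, c0230, c0231, c0232, c0233, c0300, c0301, c0302, c0330, c0331, c0332, c0333, c1010, c1111, c2020, c2121, c2222, c3000, c3001, c3002, c3003, c3030, c3031, c3032, c3033, c3100, c3101, c3102, c3103, c3130, c3131, c3132, c3133, c3200, c3201, c3202, c3203, c3230, c3231, c3232, c3233, c3300, c3301, c3302, c3303, c3330, c3331, c3332, c3333]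
  rw [hf, hg, hlam]
  ring
end

section
/- Let δ be a real number with 1/2 ≤ δ ≤ 2, and let (x,z) ∈ ℝ² satisfy |x − z| ≤ 2 − δ and |x + 2z| ≤ 2δ − 1. Then x² + z² + 4xz ≥ min{ δ² + 2δ − 2, (11δ² − 14δ + 2)/3, −(2 − δ)²/2 }. -/
theorem q_lower_bound_on_D (δ x z : ℝ)
    (hδ1 : 1/2 ≤ δ) (hδ2 : δ ≤ 2)
    (h1 : |x - z| ≤ 2 - δ) (h2 : |x + 2*z| ≤ 2*δ - 1) :
    x^2 + z^2 + 4*x*z ≥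
      min (min (δ^2 + 2*δ - 2) ((11*δ^2 - 14*δ + 2)/3)) (-(2 - δ)^2/2) := by
  refine le_trans (min_le_right _ _) ?_
  obtain ⟨ha, hb⟩ := abs_le.mp h1
  nlinarith [sq_nonneg (x + z), mul_nonneg (by linarith : (0:ℝ) ≤ 2 - δ - (x - z)) (by linarith : (0:ℝ) ≤ 2 - δ + (x - z))]
end

section
/- Let δ be a real number with 1/2 ≤ δ ≤ 2, and let (x,z) ∈ ℝ² satisfy |x − z| ≤ 2 − δ and |x + 2z| ≤ 2δ − 1. If δ ≥ 4/5 then x² + z² + 4xz ≥ −(2 − δ)²/2, while if δ < 4/5 then x² + z² + 4xz ≥ min{ δ² + 2δ − 2, (11δ² − 14δ + 2)/3 }. -/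
theorem q_lower_bound_on_D_cases (δ x z : ℝ)
    (hδ1 : 1/2 ≤ δ) (hδ2 : δ ≤ 2)
    (h1 : |x - z| ≤ 2 - δ) (h2 : |x + 2*z| ≤ 2*δ - 1) :
    (δ ≥ 4/5 → x^2 + z^2 + 4*x*z ≥ -(2 - δ)^2/2) ∧
    (δ < 4/5 → x^2 + z^2 + 4*x*z ≥
      min (δ^2 + 2*δ - 2) ((11*δ^2 - 14*δ + 2)/3)) := by
  obtain ⟨hu1, hu2⟩ := abs_le.mp h1
  obtain ⟨hv1, hv2⟩ := abs_le.mp h2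
  constructor
  · intro hδ
    nlinarith [sq_nonneg (x + z),
      mul_nonneg (by linarith : (0:ℝ) ≤ (2 - δ) - (x - z))
        (by linarith : (0:ℝ) ≤ (2 - δ) + (x - z))]
  · intro hδ
    refine le_trans (min_le_right _ _) ?_
    rcases le_or_gt 0 (x + 2*z) with hv | hv
    · nlinarith [mul_nonneg (by linarith : (0:ℝ) ≤ (2 - δ) + (x - z))
        (by linarith : (0:ℝ) ≤ (2 - δ) - (x - z) + 2*(x + 2*z)),
        mul_nonneg (by linarith : (0:ℝ) ≤ (2*δ - 1) - (x + 2*z))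
        (by linarith : (0:ℝ) ≤ (2 - δ) - (2*δ - 1) - (x + 2*z))]
    · nlinarith [mul_nonneg (by linarith : (0:ℝ) ≤ (2 - δ) - (x - z))
        (by linarith : (0:ℝ) ≤ (2 - δ) + (x - z) - 2*(x + 2*z)),
        mul_nonneg (by linarith : (0:ℝ) ≤ (2*δ - 1) + (x + 2*z))
        (by linarith : (0:ℝ) ≤ (2 - δ) - (2*δ - 1) + (x + 2*z))]
end

section
/- Let δ be a real number with 2(√6 − 2) < δ ≤ 2, and let (x,z) ∈ ℝ² satisfy |x − z| ≤ 2 − δ and |x + 2z| ≤ 2δ − 1. Then δ² + 2δ − 2 + x² + z² + 4xz ≥ (δ² + 8δ − 8)/2 > 0. -/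
theorem Q0303_positive_range (δ x z : ℝ)
    (hδ1 : 2*(Real.sqrt 6 - 2) < δ) (hδ2 : δ ≤ 2)
    (h1 : |x - z| ≤ 2 - δ) (h2 : |x + 2*z| ≤ 2*δ - 1) :
    δ^2 + 2*δ - 2 + (x^2 + z^2 + 4*x*z) ≥ (δ^2 + 8*δ - 8)/2 ∧
    (δ^2 + 8*δ - 8)/2 > 0 := by
  have h6 : Real.sqrt 6 ^ 2 = 6 := Real.sq_sqrt (by norm_num)
  have h6n : Real.sqrt 6 ≥ 0 := Real.sqrt_nonneg 6
  have hxz : (x - z)^2 ≤ (2 - δ)^2 := by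
    have := abs_nonneg (x - z)
    nlinarith [sq_abs (x - z)]
  constructor
  · nlinarith [sq_nonneg (x + z)]
  · nlinarith
end

section
/- Let R be a Ricci-flat algebraic curvature tensor on a 4-dimensional real inner product space, not identically zero, and let (e_0,e_1,e_2,e_3) be an orthonormal basis as in Berger's lemma, normalized so that K_{01} = K_max = 1 and K_{03} = K_min = −δ (so that (e_0,…,e_3) satisfies R_{ijik} = 0 for j ≠ k, |R_{0123} − R_{0231}| ≤ K_{01} − K_{02}, and |R_{0231} − R_{0312}| ≤ K_{02} − K_{03}). If δ > 2(√6 − 2), then Q_{0303} > 0. -/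
open scoped RealInnerProductSpace

lemma Q0303_aux (δ x y : ℝ) (i1 : x - y ≤ 2 - δ) (i2 : -(2 - δ) ≤ x - y)
    (hδ : δ > 2 * (Real.sqrt 6 - 2)) :
    2 * (δ ^ 2 + x ^ 2 + y ^ 2 + 4 * x * y + 2 * (δ - 1)) > 0 := by
  have hs2 : Real.sqrt 6 ^ 2 = 6 := Real.sq_sqrt (by norm_num)
  have hs0 : (0:ℝ) ≤ Real.sqrt 6 := Real.sqrt_nonneg 6
  have h1 : 0 < δ + 4 - 2 * Real.sqrt 6 := by linarith
  have h2 : 0 < δ + 4 + 2 * Real.sqrt 6 := by linarith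
  have key : δ ^ 2 + 8 * δ - 8 > 0 := by nlinarith [mul_pos h1 h2]
  have hp : 0 ≤ (2 - δ - (x - y)) * (2 - δ + (x - y)) :=
    mul_nonneg (by linarith) (by linarith)
  nlinarith [key, hp, sq_nonneg (x + y)]

set_option maxHeartbeats 1000000 in
/-- For a nonflat Ricci-flat algebraic curvature tensor in a Berger basis
normalized so that `K₀₁ = Kmax = 1` and `K₀₃ = Kmin = −δ`, one has
`Q₀₃₀₃ > 0` whenever `δ > 2(√6 − 2)`. -/
theorem Q0303_positive
    {V : Type*} [NormedAddCommGroup V] [InnerProductSpace ℝ V]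
    [FiniteDimensional ℝ V] (hdim : Module.finrank ℝ V = 4)
    (R : V →ₗ[ℝ] V →ₗ[ℝ] V →ₗ[ℝ] V →ₗ[ℝ] ℝ)
    (hanti : ∀ x y z w : V, R x y z w = - R y x z w)
    (hpair : ∀ x y z w : V, R x y z w = R z w x y)
    (hbianchi : ∀ x y z w : V, R x y z w + R y z x w + R z x y w = 0)
    (hricciflat : ∀ (f : OrthonormalBasis (Fin 4) ℝ V) (x y : V),
      ∑ i, R x (f i) y (f i) = 0)
    (hnonzero : R ≠ 0)
    (e : OrthonormalBasis (Fin 4) ℝ V) (δ : ℝ)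
    -- normalization: K₀₁ = Kmax = 1 and K₀₃ = Kmin = −δ
    (hK01 : R (e 0) (e 1) (e 0) (e 1) = 1)
    (hK03 : R (e 0) (e 3) (e 0) (e 3) = -δ)
    (hmax : ∀ u v : V, ⟪u, u⟫ = 1 → ⟪v, v⟫ = 1 → ⟪u, v⟫ = 0 →
      R u v u v ≤ 1)
    (hmin : ∀ u v : V, ⟪u, u⟫ = 1 → ⟪v, v⟫ = 1 → ⟪u, v⟫ = 0 →
      -δ ≤ R u v u v)
    -- the remaining properties of Berger's basis
    (hdiag : ∀ i j k : Fin 4, j ≠ k → R (e i) (e j) (e i) (e k) = 0)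
    (hineq1 : |R (e 0) (e 1) (e 2) (e 3) - R (e 0) (e 2) (e 3) (e 1)| ≤
      R (e 0) (e 1) (e 0) (e 1) - R (e 0) (e 2) (e 0) (e 2))
    (hineq2 : |R (e 0) (e 2) (e 3) (e 1) - R (e 0) (e 3) (e 1) (e 2)| ≤
      R (e 0) (e 2) (e 0) (e 2) - R (e 0) (e 3) (e 0) (e 3))
    (B Q : Fin 4 → Fin 4 → Fin 4 → Fin 4 → ℝ)
    (hB : ∀ i j k l : Fin 4, B i j k l =
      ∑ p, ∑ q, R (e i) (e p) (e j) (e q) * R (e k) (e p) (e l) (e q))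
    (hQ : ∀ i j k l : Fin 4, Q i j k l =
      2 * (B i j k l - B i j l k + B i k j l - B i l j k))
    (hδ : δ > 2 * (Real.sqrt 6 - 2)) :
    Q 0 3 0 3 > 0 := by
  -- derived symmetries
  have hlast : ∀ x y z w : V, R x y z w = - R x y w z := by
    intro x y z w
    rw [hpair x y z w, hanti z w x y, hpair w z x y]
  have hboth : ∀ x y z w : V, R x y z w = R y x w z := by
    intro x y z w
    rw [hanti x y z w, hlast y x z w, neg_neg]
  have z1 : ∀ u z w : V, R u u z w = 0 := by
    intro u z w
    have h := hanti u u z w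
    linarith
  have z2 : ∀ u v w : V, R u v w w = 0 := by
    intro u v w
    have h := hlast u v w w
    linarith
  -- Ricci-flat consequences
  have r0 := hricciflat e (e 0) (e 0)
  have r1 := hricciflat e (e 1) (e 1)
  have r2 := hricciflat e (e 2) (e 2)
  have r3 := hricciflat e (e 3) (e 3)
  simp only [Fin.sum_univ_four, z1] at r0 r1 r2 r3
  have s10 : R (e 1) (e 0) (e 1) (e 0) = 1 := by
    rw [hboth (e 1) (e 0) (e 1) (e 0)]; exact hK01
  have s20 : R (e 2) (e 0) (e 2) (e 0) = R (e 0) (e 2) (e 0) (e 2) :=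
    hboth (e 2) (e 0) (e 2) (e 0)
  have s30 : R (e 3) (e 0) (e 3) (e 0) = -δ := by
    rw [hboth (e 3) (e 0) (e 3) (e 0)]; exact hK03
  have s21 : R (e 2) (e 1) (e 2) (e 1) = R (e 1) (e 2) (e 1) (e 2) :=
    hboth (e 2) (e 1) (e 2) (e 1)
  have s13 : R (e 1) (e 3) (e 1) (e 3) = R (e 3) (e 1) (e 3) (e 1) :=
    hboth (e 1) (e 3) (e 1) (e 3)
  have s23 : R (e 2) (e 3) (e 2) (e 3) = R (e 3) (e 2) (e 3) (e 2) :=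
    hboth (e 2) (e 3) (e 2) (e 3)
  rw [hK01, hK03] at r0
  rw [s10, s13] at r1
  rw [s20, s21, s23] at r2
  rw [s30] at r3
  have hb : R (e 0) (e 2) (e 0) (e 2) = δ - 1 := by linarith
  rw [hb] at r2
  have v3131 : R (e 3) (e 1) (e 3) (e 1) = δ - 1 := by linarith
  have v3232 : R (e 3) (e 2) (e 3) (e 2) = 1 := by linarith
  -- component values
  have v0130 : R (e 0) (e 1) (e 3) (e 0) = 0 := by
    rw [hlast (e 0) (e 1) (e 3) (e 0), hdiag 0 1 3 (by decide), neg_zero]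
  have v0230 : R (e 0) (e 2) (e 3) (e 0) = 0 := by
    rw [hlast (e 0) (e 2) (e 3) (e 0), hdiag 0 2 3 (by decide), neg_zero]
  have v0131 : R (e 0) (e 1) (e 3) (e 1) = 0 := by
    rw [hboth (e 0) (e 1) (e 3) (e 1)]; exact hdiag 1 0 3 (by decide)
  have v0232 : R (e 0) (e 2) (e 3) (e 2) = 0 := by
    rw [hboth (e 0) (e 2) (e 3) (e 2)]; exact hdiag 2 0 3 (by decide)
  have v0331 : R (e 0) (e 3) (e 3) (e 1) = 0 := by
    rw [hanti (e 0) (e 3) (e 3) (e 1), hdiag 3 0 1 (by decide), neg_zero]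
  have v0332 : R (e 0) (e 3) (e 3) (e 2) = 0 := by
    rw [hanti (e 0) (e 3) (e 3) (e 2), hdiag 3 0 2 (by decide), neg_zero]
  have v0330 : R (e 0) (e 3) (e 3) (e 0) = δ := by
    rw [hlast (e 0) (e 3) (e 3) (e 0), hK03, neg_neg]
  have v0132 : R (e 0) (e 1) (e 3) (e 2) = -R (e 0) (e 1) (e 2) (e 3) := by
    rw [hlast (e 0) (e 1) (e 3) (e 2)]
  have v3102 : R (e 3) (e 1) (e 0) (e 2) = R (e 0) (e 2) (e 3) (e 1) :=
    hpair (e 3) (e 1) (e 0) (e 2)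
  have v3201 : R (e 3) (e 2) (e 0) (e 1) = -R (e 0) (e 1) (e 2) (e 3) := by
    rw [hpair (e 3) (e 2) (e 0) (e 1), hlast (e 0) (e 1) (e 3) (e 2)]
  have d012 : R (e 0) (e 1) (e 0) (e 2) = 0 := hdiag 0 1 2 (by decide)
  have d013 : R (e 0) (e 1) (e 0) (e 3) = 0 := hdiag 0 1 3 (by decide)
  have d021 : R (e 0) (e 2) (e 0) (e 1) = 0 := hdiag 0 2 1 (by decide)
  have d023 : R (e 0) (e 2) (e 0) (e 3) = 0 := hdiag 0 2 3 (by decide)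
  have d031 : R (e 0) (e 3) (e 0) (e 1) = 0 := hdiag 0 3 1 (by decide)
  have d032 : R (e 0) (e 3) (e 0) (e 2) = 0 := hdiag 0 3 2 (by decide)
  -- abbreviations for the two mixed components
  set x := R (e 0) (e 1) (e 2) (e 3) with hx
  set y := R (e 0) (e 2) (e 3) (e 1) with hy
  -- compute the three relevant B components
  have hBa : B 0 3 0 3 = δ ^ 2 + x ^ 2 + y ^ 2 := by
    rw [hB]
    simp only [Fin.sum_univ_four, z1, z2, v0130, v0131, v0132, v0230, v0232,
      v0330, v0331, v0332, mul_zero, zero_mul, add_zero, zero_add]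
    ring
  have hBb : B 0 3 3 0 = -(2 * x * y) := by
    rw [hB]
    simp only [Fin.sum_univ_four, z1, z2, v0130, v0131, v0132, v0230, v0232,
      v0330, v0331, v0332, v3102, v3201, mul_zero, zero_mul, add_zero, zero_add]
    ring
  have hBc : B 0 0 3 3 = (δ - 1) + (δ - 1) := by
    rw [hB]
    simp only [Fin.sum_univ_four, z1, z2, d012, d013, d021, d023, d031, d032,
      hK01, hb, hK03, v3131, v3232, mul_zero, zero_mul, mul_one, one_mul,
      add_zero, zero_add]
  have hQv : Q 0 3 0 3 =
      2 * (δ ^ 2 + x ^ 2 + y ^ 2 + 4 * x * y + 2 * (δ - 1)) := by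
    rw [hQ, hBa, hBb, hBc]
    ring
  -- the inequality |x - y| ≤ 2 - δ
  rw [hK01, hb] at hineq1
  have habs := abs_le.mp hineq1
  have i1 : x - y ≤ 2 - δ := by linarith [habs.2]
  have i2 : -(2 - δ) ≤ x - y := by linarith [habs.1]
  rw [hQv]
  exact Q0303_aux δ x y i1 i2 hδ
end

section
/- Let R be a Ricci-flat algebraic curvature tensor on a 4-dimensional real inner product space, and let (e_0,e_1,e_2,e_3) be an orthonormal basis such that R_{ijik} = 0 whenever j ≠ k (0 ≤ i,j,k ≤ 3). Then (1/2)·Q_{0101} = K_{01}² − 2K_{01}K_{03} − 2K_{03}² + q, where q = R_{0231}² + R_{0312}² + 4·R_{0231}·R_{0312}. -/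
open scoped RealInnerProductSpace

set_option maxHeartbeats 2000000

/-- The "sectional curvature" `Q₀₁₀₁` of the quadratic curvature term `Q(R)`
for a Ricci-flat algebraic curvature tensor in a Berger-type orthonormal basis. -/
theorem Q0101_formula
    {V : Type*} [NormedAddCommGroup V] [InnerProductSpace ℝ V]
    [FiniteDimensional ℝ V] (hdim : Module.finrank ℝ V = 4)
    (R : V →ₗ[ℝ] V →ₗ[ℝ] V →ₗ[ℝ] V →ₗ[ℝ] ℝ)
    (hanti : ∀ x y z w : V, R x y z w = - R y x z w)
    (hpair : ∀ x y z w : V, R x y z w = R z w x y)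
    (hbianchi : ∀ x y z w : V, R x y z w + R y z x w + R z x y w = 0)
    (hricciflat : ∀ (f : OrthonormalBasis (Fin 4) ℝ V) (x y : V),
      ∑ i, R x (f i) y (f i) = 0)
    (e : OrthonormalBasis (Fin 4) ℝ V)
    (hdiag : ∀ i j k : Fin 4, j ≠ k → R (e i) (e j) (e i) (e k) = 0)
    (B Q : Fin 4 → Fin 4 → Fin 4 → Fin 4 → ℝ)
    (hB : ∀ i j k l : Fin 4, B i j k l =
      ∑ p, ∑ q, R (e i) (e p) (e j) (e q) * R (e k) (e p) (e l) (e q))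
    (hQ : ∀ i j k l : Fin 4, Q i j k l =
      2 * (B i j k l - B i j l k + B i k j l - B i l j k)) :
    (1/2) * Q 0 1 0 1 =
      (R (e 0) (e 1) (e 0) (e 1))^2
        - 2 * R (e 0) (e 1) (e 0) (e 1) * R (e 0) (e 3) (e 0) (e 3)
        - 2 * (R (e 0) (e 3) (e 0) (e 3))^2
        + ((R (e 0) (e 2) (e 3) (e 1))^2 + (R (e 0) (e 3) (e 1) (e 2))^2
            + 4 * R (e 0) (e 2) (e 3) (e 1) * R (e 0) (e 3) (e 1) (e 2)) := by
  -- antisymmetry in the last two slots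
  have hanti2 : ∀ x y z w : V, R x y z w = - R x y w z := by
    intro x y z w
    rw [hpair x y z w, hanti z w x y, hpair w z x y]
  have hflip : ∀ x y z w : V, R x y z w = R y x w z := by
    intro x y z w
    rw [hanti x y z w, hanti2 y x z w, neg_neg]
  have hz1 : ∀ x z w : V, R x x z w = 0 := by
    intro x z w; have := hanti x x z w; linarith
  have hz2 : ∀ x y z : V, R x y z z = 0 := by
    intro x y z; have := hanti2 x y z z; linarith
  have hz3 : ∀ i j k : Fin 4, i ≠ k → R (e i) (e j) (e k) (e j) = 0 := by
    intro i j k h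
    rw [hanti (e i) (e j), hanti2 (e j) (e i), hdiag j i k h, neg_zero, neg_zero]
  -- components
  have h0110 : R (e 0) (e 1) (e 1) (e 0) = - R (e 0) (e 1) (e 0) (e 1) :=
    hanti2 _ _ _ _
  have h0112 : R (e 0) (e 1) (e 1) (e 2) = 0 := by
    rw [hanti2, hz3 0 1 2 (by decide), neg_zero]
  have h0113 : R (e 0) (e 1) (e 1) (e 3) = 0 := by
    rw [hanti2, hz3 0 1 3 (by decide), neg_zero]
  have h0210 : R (e 0) (e 2) (e 1) (e 0) = 0 := by
    rw [hanti2, hdiag 0 2 1 (by decide), neg_zero]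
  have h0310 : R (e 0) (e 3) (e 1) (e 0) = 0 := by
    rw [hanti2, hdiag 0 3 1 (by decide), neg_zero]
  have h0213 : R (e 0) (e 2) (e 1) (e 3) = - R (e 0) (e 2) (e 3) (e 1) :=
    hanti2 _ _ _ _
  -- R_{1p0q} components via pair symmetry
  have h1001 : R (e 1) (e 0) (e 0) (e 1) = - R (e 0) (e 1) (e 0) (e 1) :=
    hanti _ _ _ _
  have h1002 : R (e 1) (e 0) (e 0) (e 2) = 0 := by
    rw [hpair (e 1) (e 0) (e 0) (e 2), h0210]
  have h1003 : R (e 1) (e 0) (e 0) (e 3) = 0 := by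
    rw [hpair (e 1) (e 0) (e 0) (e 3), h0310]
  have h1201 : R (e 1) (e 2) (e 0) (e 1) = 0 := by
    rw [hpair (e 1) (e 2) (e 0) (e 1), h0112]
  have h1301 : R (e 1) (e 3) (e 0) (e 1) = 0 := by
    rw [hpair (e 1) (e 3) (e 0) (e 1), h0113]
  have h1203 : R (e 1) (e 2) (e 0) (e 3) = R (e 0) (e 3) (e 1) (e 2) :=
    hpair _ _ _ _
  have h1302 : R (e 1) (e 3) (e 0) (e 2) = - R (e 0) (e 2) (e 3) (e 1) := by
    rw [hpair (e 1) (e 3) (e 0) (e 2), h0213]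
  have h1010 : R (e 1) (e 0) (e 1) (e 0) = R (e 0) (e 1) (e 0) (e 1) :=
    (hflip _ _ _ _).symm
  have h2020 : R (e 2) (e 0) (e 2) (e 0) = R (e 0) (e 2) (e 0) (e 2) :=
    (hflip _ _ _ _).symm
  have h2121 : R (e 2) (e 1) (e 2) (e 1) = R (e 1) (e 2) (e 1) (e 2) :=
    (hflip _ _ _ _).symm
  have h3030 : R (e 3) (e 0) (e 3) (e 0) = R (e 0) (e 3) (e 0) (e 3) :=
    (hflip _ _ _ _).symm
  have h3131 : R (e 3) (e 1) (e 3) (e 1) = R (e 1) (e 3) (e 1) (e 3) :=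
    (hflip _ _ _ _).symm
  have h3232 : R (e 3) (e 2) (e 3) (e 2) = R (e 2) (e 3) (e 2) (e 3) :=
    (hflip _ _ _ _).symm
  -- Ricci equations
  have ric0 : R (e 0) (e 1) (e 0) (e 1) + R (e 0) (e 2) (e 0) (e 2)
      + R (e 0) (e 3) (e 0) (e 3) = 0 := by
    have h := hricciflat e (e 0) (e 0)
    rw [Fin.sum_univ_four, hz1] at h
    linarith
  have ric1 : R (e 0) (e 1) (e 0) (e 1) + R (e 1) (e 2) (e 1) (e 2)
      + R (e 1) (e 3) (e 1) (e 3) = 0 := by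
    have h := hricciflat e (e 1) (e 1)
    rw [Fin.sum_univ_four, hz1, h1010] at h
    linarith
  have ric2 : R (e 0) (e 2) (e 0) (e 2) + R (e 1) (e 2) (e 1) (e 2)
      + R (e 2) (e 3) (e 2) (e 3) = 0 := by
    have h := hricciflat e (e 2) (e 2)
    rw [Fin.sum_univ_four, hz1, h2020, h2121] at h
    linarith
  have ric3 : R (e 0) (e 3) (e 0) (e 3) + R (e 1) (e 3) (e 1) (e 3)
      + R (e 2) (e 3) (e 2) (e 3) = 0 := by
    have h := hricciflat e (e 3) (e 3)
    rw [Fin.sum_univ_four, hz1, h3030, h3131, h3232] at h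
    linarith
  have h12 : R (e 1) (e 2) (e 1) (e 2) = R (e 0) (e 3) (e 0) (e 3) := by linarith
  have h13 : R (e 1) (e 3) (e 1) (e 3) = R (e 0) (e 2) (e 0) (e 2) := by linarith
  rw [hQ, hB 0 1 0 1, hB 0 1 1 0, hB 0 0 1 1]
  simp only [Fin.sum_univ_four]
  simp only [hz1, hz2, hdiag 0 1 2 (by decide : (1:Fin 4) ≠ 2),
    hdiag 0 1 3 (by decide : (1:Fin 4) ≠ 3), hdiag 0 2 1 (by decide : (2:Fin 4) ≠ 1),
    hdiag 0 2 3 (by decide : (2:Fin 4) ≠ 3), hdiag 0 3 1 (by decide : (3:Fin 4) ≠ 1),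
    hdiag 0 3 2 (by decide : (3:Fin 4) ≠ 2),
    hdiag 1 0 2 (by decide : (0:Fin 4) ≠ 2), hdiag 1 0 3 (by decide : (0:Fin 4) ≠ 3),
    hdiag 1 2 0 (by decide : (2:Fin 4) ≠ 0), hdiag 1 2 3 (by decide : (2:Fin 4) ≠ 3),
    hdiag 1 3 0 (by decide : (3:Fin 4) ≠ 0), hdiag 1 3 2 (by decide : (3:Fin 4) ≠ 2),
    hz3 0 1 1 (by decide : (0:Fin 4) ≠ 1), hz3 0 2 1 (by decide : (0:Fin 4) ≠ 1),
    hz3 0 3 1 (by decide : (0:Fin 4) ≠ 1), hz3 1 2 0 (by decide : (1:Fin 4) ≠ 0),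
    hz3 1 3 0 (by decide : (1:Fin 4) ≠ 0), hz3 1 0 0,
    h0110, h0112, h0113, h0210, h0310, h0213, h1001, h1002, h1003, h1201, h1301,
    h1203, h1302, h1010, h12, h13]
  ring_nf
  linear_combination (2 * R (e 0) (e 3) (e 0) (e 3)) * ric0
end

section
/- Let δ be a real number with 1 ≤ δ ≤ 2, and let (y,z) ∈ ℝ² satisfy |y + 2z| ≤ 2 − δ and |z − y| ≤ 2δ − 1. Then y² + z² + 4yz ≤ max{ (2δ² − 14δ + 11)/3, (2 − δ)², 1 + 2δ − 2δ² } = (2 − δ)². -/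
theorem q_upper_bound_on_region (δ y z : ℝ)
    (hδ1 : 1 ≤ δ) (hδ2 : δ ≤ 2)
    (h1 : |y + 2*z| ≤ 2 - δ) (h2 : |z - y| ≤ 2*δ - 1) :
    y^2 + z^2 + 4*y*z ≤
      max (max ((2*δ^2 - 14*δ + 11)/3) ((2 - δ)^2)) (1 + 2*δ - 2*δ^2) ∧
    max (max ((2*δ^2 - 14*δ + 11)/3) ((2 - δ)^2)) (1 + 2*δ - 2*δ^2)
      = (2 - δ)^2 := by
  have h1' := abs_le.mp h1
  have hmax : max (max ((2*δ^2 - 14*δ + 11)/3) ((2 - δ)^2)) (1 + 2*δ - 2*δ^2) = (2 - δ)^2 := by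
    have hA : (2*δ^2 - 14*δ + 11)/3 ≤ (2 - δ)^2 := by nlinarith [sq_nonneg (δ+1)]
    have hC : 1 + 2*δ - 2*δ^2 ≤ (2 - δ)^2 := by nlinarith [sq_nonneg (δ-1)]
    rw [max_eq_right hA, max_eq_left hC]
  refine ⟨?_, hmax⟩
  rw [hmax]
  nlinarith [sq_nonneg z, h1'.1, h1'.2]
end

section
/- Let δ be a real number with √6 − 1 < δ ≤ 2, and let (y,z) ∈ ℝ² satisfy |y + 2z| ≤ 2 − δ and |z − y| ≤ 2δ − 1. Then 1 + 2δ − 2δ² + y² + z² + 4yz < 0. -/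
theorem Q0101_negative_range (δ y z : ℝ)
    (hδ1 : Real.sqrt 6 - 1 < δ) (hδ2 : δ ≤ 2)
    (h1 : |y + 2*z| ≤ 2 - δ) (h2 : |z - y| ≤ 2*δ - 1) :
    1 + 2*δ - 2*δ^2 + (y^2 + z^2 + 4*y*z) < 0 := by
  have h6 : Real.sqrt 6 ^ 2 = 6 := Real.sq_sqrt (by norm_num)
  have hs : (0:ℝ) ≤ Real.sqrt 6 := Real.sqrt_nonneg _
  have ha := abs_le.mp h1
  nlinarith [sq_nonneg z, sq_nonneg (δ + 1 - Real.sqrt 6),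
    mul_self_nonneg (y + 2*z - (2 - δ)), mul_self_nonneg (y + 2*z + (2 - δ)),
    ha.1, ha.2]
end

section
/- Let R be a Ricci-flat algebraic curvature tensor on a 4-dimensional real inner product space, not identically zero, and let (e_0,e_1,e_2,e_3) be an orthonormal basis as in Berger's lemma, normalized so that K_{01} = K_max = 1 and K_{03} = K_min = −δ (so that (e_0,…,e_3) satisfies R_{ijik} = 0 for j ≠ k, |R_{0123} − R_{0231}| ≤ K_{01} − K_{02}, and |R_{0231} − R_{0312}| ≤ K_{02} − K_{03}). If δ > √6 − 1, then Q_{0101} < 0. -/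
open scoped RealInnerProductSpace

set_option maxHeartbeats 1600000

private lemma Q0101_aux (b c δ : ℝ) (h6 : 6 < (δ + 1)^2)
    (key1 : 2*b + c ≤ 2 - δ) (key2 : -(2 - δ) ≤ 2*b + c) :
    2*(1 + b^2 + c^2 + 4*b*c + 2*δ - 2*δ^2) < 0 := by
  nlinarith [h6, sq_nonneg b,
    mul_nonneg (show (0:ℝ) ≤ 2 - δ - (2*b + c) by linarith)
      (show (0:ℝ) ≤ 2 - δ + (2*b + c) by linarith)]


/-- For a nonflat Ricci-flat algebraic curvature tensor in a Berger basis
normalized so that `K₀₁ = Kmax = 1` and `K₀₃ = Kmin = −δ`, one has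
`Q₀₁₀₁ < 0` whenever `δ > √6 − 1`. -/
theorem Q0101_negative
    {V : Type*} [NormedAddCommGroup V] [InnerProductSpace ℝ V]
    [FiniteDimensional ℝ V] (hdim : Module.finrank ℝ V = 4)
    (R : V →ₗ[ℝ] V →ₗ[ℝ] V →ₗ[ℝ] V →ₗ[ℝ] ℝ)
    (hanti : ∀ x y z w : V, R x y z w = - R y x z w)
    (hpair : ∀ x y z w : V, R x y z w = R z w x y)
    (hbianchi : ∀ x y z w : V, R x y z w + R y z x w + R z x y w = 0)
    (hricciflat : ∀ (f : OrthonormalBasis (Fin 4) ℝ V) (x y : V),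
      ∑ i, R x (f i) y (f i) = 0)
    (hnonzero : R ≠ 0)
    (e : OrthonormalBasis (Fin 4) ℝ V) (δ : ℝ)
    -- normalization: K₀₁ = Kmax = 1 and K₀₃ = Kmin = −δ
    (hK01 : R (e 0) (e 1) (e 0) (e 1) = 1)
    (hK03 : R (e 0) (e 3) (e 0) (e 3) = -δ)
    (hmax : ∀ u v : V, ⟪u, u⟫ = 1 → ⟪v, v⟫ = 1 → ⟪u, v⟫ = 0 →
      R u v u v ≤ 1)
    (hmin : ∀ u v : V, ⟪u, u⟫ = 1 → ⟪v, v⟫ = 1 → ⟪u, v⟫ = 0 →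
      -δ ≤ R u v u v)
    -- the remaining properties of Berger's basis
    (hdiag : ∀ i j k : Fin 4, j ≠ k → R (e i) (e j) (e i) (e k) = 0)
    (hineq1 : |R (e 0) (e 1) (e 2) (e 3) - R (e 0) (e 2) (e 3) (e 1)| ≤
      R (e 0) (e 1) (e 0) (e 1) - R (e 0) (e 2) (e 0) (e 2))
    (hineq2 : |R (e 0) (e 2) (e 3) (e 1) - R (e 0) (e 3) (e 1) (e 2)| ≤
      R (e 0) (e 2) (e 0) (e 2) - R (e 0) (e 3) (e 0) (e 3))
    (B Q : Fin 4 → Fin 4 → Fin 4 → Fin 4 → ℝ)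
    (hB : ∀ i j k l : Fin 4, B i j k l =
      ∑ p, ∑ q, R (e i) (e p) (e j) (e q) * R (e k) (e p) (e l) (e q))
    (hQ : ∀ i j k l : Fin 4, Q i j k l =
      2 * (B i j k l - B i j l k + B i k j l - B i l j k))
    (hδ : δ > Real.sqrt 6 - 1) :
    Q 0 1 0 1 < 0 := by
  -- derived symmetries
  have hzxx : ∀ x z w : V, R x x z w = 0 := by
    intro x z w
    have h := hanti x x z w
    linarith
  have hzzz : ∀ x y z : V, R x y z z = 0 := by
    intro x y z
    rw [hpair]
    exact hzxx _ _ _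
  have hsw : ∀ x y z w : V, R x y z w = - R x y w z := by
    intro x y z w
    rw [hpair x y z w, hanti z w x y, hpair w z x y]
  have hswp : ∀ x y z w : V, R x y z w = R y x w z := by
    intro x y z w
    rw [hanti x y z w, hsw y x z w, neg_neg]
  obtain ⟨a, hA⟩ : ∃ x, R (e 0) (e 1) (e 2) (e 3) = x := ⟨_, rfl⟩
  obtain ⟨b, hBv⟩ : ∃ x, R (e 0) (e 2) (e 3) (e 1) = x := ⟨_, rfl⟩
  obtain ⟨c, hCv⟩ : ∃ x, R (e 0) (e 3) (e 1) (e 2) = x := ⟨_, rfl⟩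
  -- Ricci flatness: diagonal sectional curvatures
  have r0 := hricciflat e (e 0) (e 0)
  have r1 := hricciflat e (e 1) (e 1)
  have r2 := hricciflat e (e 2) (e 2)
  have r3 := hricciflat e (e 3) (e 3)
  simp only [Fin.sum_univ_four] at r0 r1 r2 r3
  rw [hzxx, hK01, hK03] at r0
  have hK02 : R (e 0) (e 2) (e 0) (e 2) = δ - 1 := by linarith
  have h1010 : R (e 1) (e 0) (e 1) (e 0) = 1 := (hswp _ _ _ _).trans hK01
  have h2020 : R (e 2) (e 0) (e 2) (e 0) = δ - 1 := (hswp _ _ _ _).trans hK02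
  have h3030 : R (e 3) (e 0) (e 3) (e 0) = -δ := (hswp _ _ _ _).trans hK03
  have h2121 : R (e 2) (e 1) (e 2) (e 1) = R (e 1) (e 2) (e 1) (e 2) := hswp _ _ _ _
  have h3131 : R (e 3) (e 1) (e 3) (e 1) = R (e 1) (e 3) (e 1) (e 3) := hswp _ _ _ _
  have h3232 : R (e 3) (e 2) (e 3) (e 2) = R (e 2) (e 3) (e 2) (e 3) := hswp _ _ _ _
  rw [h1010, hzxx] at r1
  rw [h2020, h2121, hzxx] at r2
  rw [h3030, h3131, h3232, hzxx] at r3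
  have hK12 : R (e 1) (e 2) (e 1) (e 2) = -δ := by linarith
  have hK13 : R (e 1) (e 3) (e 1) (e 3) = δ - 1 := by linarith
  -- mixed components
  have h0213 : R (e 0) (e 2) (e 1) (e 3) = -b := by rw [hsw (e 0) (e 2) (e 1) (e 3), hBv]
  have h0110 : R (e 0) (e 1) (e 1) (e 0) = -1 := by rw [hsw (e 0) (e 1) (e 1) (e 0), hK01]
  have h0112 : R (e 0) (e 1) (e 1) (e 2) = 0 := by
    rw [hanti (e 0) (e 1) (e 1) (e 2), hdiag 1 0 2 (by decide), neg_zero]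
  have h0113 : R (e 0) (e 1) (e 1) (e 3) = 0 := by
    rw [hanti (e 0) (e 1) (e 1) (e 3), hdiag 1 0 3 (by decide), neg_zero]
  have h0210 : R (e 0) (e 2) (e 1) (e 0) = 0 := by
    rw [hsw (e 0) (e 2) (e 1) (e 0), hdiag 0 2 1 (by decide), neg_zero]
  have h0212 : R (e 0) (e 2) (e 1) (e 2) = 0 := by
    rw [hanti (e 0) (e 2) (e 1) (e 2), hsw (e 2) (e 0) (e 1) (e 2), hdiag 2 0 1 (by decide)]
    norm_num
  have h0310 : R (e 0) (e 3) (e 1) (e 0) = 0 := by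
    rw [hsw (e 0) (e 3) (e 1) (e 0), hdiag 0 3 1 (by decide), neg_zero]
  have h0313 : R (e 0) (e 3) (e 1) (e 3) = 0 := by
    rw [hanti (e 0) (e 3) (e 1) (e 3), hsw (e 3) (e 0) (e 1) (e 3), hdiag 3 0 1 (by decide)]
    norm_num
  have h1203 : R (e 1) (e 2) (e 0) (e 3) = c := (hpair _ _ _ _).trans hCv
  have h1302 : R (e 1) (e 3) (e 0) (e 2) = -b := (hpair _ _ _ _).trans h0213
  have h2013 : R (e 2) (e 0) (e 1) (e 3) = b := by
    rw [hanti (e 2) (e 0) (e 1) (e 3), h0213, neg_neg]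
  have h0102 : R (e 0) (e 1) (e 0) (e 2) = 0 := hdiag 0 1 2 (by decide)
  have h0103 : R (e 0) (e 1) (e 0) (e 3) = 0 := hdiag 0 1 3 (by decide)
  have h0201 : R (e 0) (e 2) (e 0) (e 1) = 0 := hdiag 0 2 1 (by decide)
  have h0203 : R (e 0) (e 2) (e 0) (e 3) = 0 := hdiag 0 2 3 (by decide)
  have h0301 : R (e 0) (e 3) (e 0) (e 1) = 0 := hdiag 0 3 1 (by decide)
  have h0302 : R (e 0) (e 3) (e 0) (e 2) = 0 := hdiag 0 3 2 (by decide)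
  -- first Bianchi identity: a + b + c = 0
  have hbi := hbianchi (e 0) (e 1) (e 2) (e 3)
  rw [hA, h1203, h2013] at hbi
  -- Berger inequality: |a - b| ≤ 2 - δ
  rw [hA, hBv, hK01, hK02] at hineq1
  obtain ⟨hl, hr⟩ := abs_le.mp hineq1
  -- compute the B components
  have hB1 : B 0 1 0 1 = 1 + b^2 + c^2 := by
    rw [hB 0 1 0 1]
    simp only [Fin.sum_univ_four, hzxx, hzzz, h0110, h0112, h0113, h0210, h0212,
      h0213, h0310, hCv, h0313]
    ring
  have hB2 : B 0 1 1 0 = -(2*b*c) := by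
    rw [hB 0 1 1 0]
    simp only [Fin.sum_univ_four, hzxx, hzzz, h0110, h0112, h0113, h0210, h0212,
      h0213, h0310, hCv, h0313, h1203, h1302]
    ring
  have hB3 : B 0 0 1 1 = 2*δ - 2*δ^2 := by
    rw [hB 0 0 1 1]
    simp only [Fin.sum_univ_four, hzxx, hzzz, hK01, h0102, h0103, h0201, h0203,
      h0301, h0302, hK02, hK03, hK12, hK13]
    ring
  have h6 : 6 < (δ + 1)^2 := by
    have h1 : Real.sqrt 6 < δ + 1 := by linarith
    calc (6:ℝ) = Real.sqrt 6 ^ 2 := (Real.sq_sqrt (by norm_num)).symm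
      _ < (δ + 1)^2 := by
          apply pow_lt_pow_left₀ h1 (Real.sqrt_nonneg 6)
          norm_num
  have key1 : 2*b + c ≤ 2 - δ := by linarith
  have key2 : -(2 - δ) ≤ 2*b + c := by linarith
  have hQv : Q 0 1 0 1 = 2*(1 + b^2 + c^2 + 4*b*c + 2*δ - 2*δ^2) := by
    rw [hQ 0 1 0 1, hB1, hB2, hB3]; ring
  rw [hQv]
  exact Q0101_aux b c δ h6 key1 key2
end
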